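/- For every stream s: if s is almost always blue (pre s), then the set Reds s of red positions of s is streamless. -/

import Mathlib

/-- The suffix of a stream at position `n`. -/
def suff (s : ℕ → Bool) (n : ℕ) : ℕ → Bool := fun k => s (n + k)

/-- The weak-until predicate transformer (greatest fixed point, impredicative). -/
def W (X : (ℕ → Bool) → Prop) (s : ℕ → Bool) : Prop :=
  ∃ Y : (ℕ → Bool) → Prop, Y s ∧
    ∀ t, Y t → (t 0 = true → X (suff t 1)) ∧ (t 0 = false → Y (suff t 1))

/-- A stream is almost always blue: least fixed point of `W`. -/
def pre (s : ℕ → Bool) : Prop :=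
  ∀ P : (ℕ → Bool) → Prop, (∀ t, W P t → P t) → P s

/-- The strong-until predicate transformer (inductive). -/
inductive U (X : (ℕ → Bool) → Prop) : (ℕ → Bool) → Prop
  | red : ∀ t, t 0 = true → X (suff t 1) → U X t
  | blue : ∀ t, t 0 = false → U X (suff t 1) → U X t

/-- A stream is infinitely often red: greatest fixed point of `U`. -/
def rep (s : ℕ → Bool) : Prop :=
  ∃ P : (ℕ → Bool) → Prop, P s ∧ ∀ t, P t → U P t

/-- `succs s n m` : `m` is the position following the first red position at or after `n`. -/
def succs (s : ℕ → Bool) (n m : ℕ) : Prop :=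
  ∃ l, n ≤ l ∧ (∀ k, n ≤ k → k < l → s k = false) ∧ s l = true ∧ m = l + 1

/-- The set of red positions of a stream. -/
def Reds (s : ℕ → Bool) : Set ℕ := {n | s n = true}

/-- The set of blue positions of a stream. -/
def Blues (s : ℕ → Bool) : Set ℕ := {n | s n = false}

/-- A colist is duplicate-free over `A`: entries lie in `A` and entries at
distinct positions are distinct. -/
def DupFree (l : Stream'.Seq ℕ) (A : Set ℕ) : Prop :=
  (∀ n x, l.get? n = some x → x ∈ A) ∧
  (∀ m n x y, m ≠ n → l.get? m = some x → l.get? n = some y → x ≠ y)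

/-- A set of naturals is streamless if every duplicate-free colist over it is finite. -/
def Streamless (A : Set ℕ) : Prop :=
  ∀ l : Stream'.Seq ℕ, DupFree l A → l.Terminates

/-- A set of naturals is almost full if every strictly increasing sequence hits it. -/
def AlmostFull (A : Set ℕ) : Prop :=
  ∀ i : ℕ → ℕ, StrictMono i → ∃ n, i n ∈ A

/-- A colist is a descending chain of the relation `r` starting at `x`. -/
def IsDescChain (r : ℕ → ℕ → Prop) (x : ℕ) (l : Stream'.Seq ℕ) : Prop :=
  (∀ y, l.get? 0 = some y → r x y) ∧
  (∀ n a b, l.get? n = some a → l.get? (n + 1) = some b → r a b)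

/-- `r` is strongly normalizing at `x`: every descending chain starting at `x` is finite. -/
def SN (r : ℕ → ℕ → Prop) (x : ℕ) : Prop :=
  ∀ l : Stream'.Seq ℕ, IsDescChain r x l → l.Terminates

/-- `n` is antifounded wrt `r`: greatest fixed point of the one-step descent operator. -/
def af (r : ℕ → ℕ → Prop) (n : ℕ) : Prop :=
  ∃ Q : ℕ → Prop, Q n ∧ ∀ k, Q k → ∃ m, r k m ∧ Q m

/-- `atmost n s`: fewer than `n` red positions up to every position `m`. -/
def atmost (n : ℕ) (s : ℕ → Bool) : Prop :=
  ∀ m, ((Finset.range (m + 1)).filter (fun k => s k = true)).card < n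

/-- Iterates of the weak-until operator starting from the empty predicate. -/
def Fiter : ℕ → (ℕ → Bool) → Prop
  | 0 => fun _ => False
  | n + 1 => W (Fiter n)

/-- The ω-iterate of the weak-until operator. -/
def Fomega (s : ℕ → Bool) : Prop := ∃ n, Fiter n s

/-- The Lesser Principle of Omniscience. -/
def LPO : Prop := ∀ s : ℕ → Bool, (∃ n, s n = true) ∨ (∀ n, s n = false)

/-- Markov's Principle. -/
def MP : Prop := ∀ s : ℕ → Bool, ¬(∀ n, s n = false) → ∃ n, s n = true

/-- Noetherian sets of naturals. -/
inductive Noeth : Set ℕ → Prop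
  | intro : ∀ A : Set ℕ, (∀ x ∈ A, Noeth (A \ {x})) → Noeth A

/-!
If `s` is almost always blue then it has only finitely many red positions: the predicate
"`Reds t` is finite" is closed under `W`, because a stream satisfying `W X` is either blue
forever or, at its first red position, hands over to a suffix satisfying `X`, and a stream
has finitely many reds as soon as some suffix does. A duplicate-free colist over a finite set
cannot be infinite, since its entries would give an injection `ℕ → A`.
-/

lemma suff_suff (s : ℕ → Bool) (m n : ℕ) : suff (suff s m) n = suff s (m + n) := by
  funext k
  simp only [suff, add_assoc]

lemma reds_finite_of_suff {s : ℕ → Bool} {n : ℕ} (h : (Reds (suff s n)).Finite) :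
    (Reds s).Finite := by
  refine ((Set.finite_Iio n).union (h.image (n + ·))).subset fun k hk => ?_
  rcases lt_or_ge k n with hkn | hnk
  · exact Or.inl hkn
  · refine Or.inr ⟨k - n, ?_, by simp only [Nat.add_sub_cancel' hnk]⟩
    show s (n + (k - n)) = true
    rwa [Nat.add_sub_cancel' hnk]

lemma W.exists_suff {X : (ℕ → Bool) → Prop} {t : ℕ → Bool} (hW : W X t) {l : ℕ}
    (hl : t l = true) : ∃ m, X (suff t m) := by
  obtain ⟨Y, hYt, hY⟩ := hW
  induction l generalizing t with
  | zero => exact ⟨1, (hY t hYt).1 hl⟩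
  | succ l ih =>
    cases h0 : t 0
    · obtain ⟨m, hm⟩ := ih (by simpa only [suff, add_comm] using hl) ((hY t hYt).2 h0)
      exact ⟨1 + m, by rwa [← suff_suff]⟩
    · exact ⟨1, (hY t hYt).1 h0⟩

lemma pre.reds_finite {s : ℕ → Bool} (h : pre s) : (Reds s).Finite := by
  refine h (fun t => (Reds t).Finite) fun t hW => ?_
  rcases (Reds t).eq_empty_or_nonempty with hempty | ⟨l, hl⟩
  · exact hempty ▸ Set.finite_empty
  · obtain ⟨m, hm⟩ := hW.exists_suff hl
    exact reds_finite_of_suff hm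

lemma Set.Finite.streamless {A : Set ℕ} (hA : A.Finite) : Streamless A := by
  rintro l ⟨hmem, hdistinct⟩
  by_contra hinf
  have hsome : ∀ n, ∃ x, l.get? n = some x :=
    fun n => Option.ne_none_iff_exists'.mp fun h => hinf ⟨n, h⟩
  choose f hf using hsome
  refine Set.infinite_of_injective_forall_mem (fun m n hmn => ?_) (fun n => hmem n _ (hf n)) hA
  by_contra hne
  exact hdistinct m n _ _ hne (hf m) (hf n) hmn

theorem stmt_11 : ∀ s : ℕ → Bool, pre s → Streamless (Reds s) :=
  fun _ hs => hs.reds_finite.streamless
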